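/- The Fourier coefficients of g(x,y) = x + y − 2xy − |x − y| on [0,1]² are: ĝ(0,0) = 1/6; ĝ(k,0) = −1/(2π²k²) for k ≠ 0; ĝ(0,k) = −1/(2π²k²) for k ≠ 0; ĝ(k,−k) = 1/(2π²k²) for k ≠ 0; and ĝ(k₁,k₂) = 0 for all other (k₁,k₂) with k₁,k₂ ≠ 0 and k₂ ≠ −k₁. -/

import Mathlib

open Real Complex

/-- The function `g(x,y) = x + y − 2xy − |x − y|`. -/
noncomputable def gfun (x y : ℝ) : ℝ := x + y - 2 * x * y - |x - y|

/-- Fourier coefficients of `g` on `[0,1]²`. -/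
noncomputable def ghat (k₁ k₂ : ℤ) : ℂ :=
  ∫ x in (0:ℝ)..1, ∫ y in (0:ℝ)..1,
    (gfun x y : ℂ) * Complex.exp (-2 * π * Complex.I * (k₁ * x + k₂ * y))

/-! For fixed `x ∈ [0, 1]`, `y ↦ g(x, y) = 2 min(x, y) (1 - max(x, y))` is a tent vanishing at
`0` and `1`. Integrating the two linear pieces against `exp (c y)` with `exp c = 1, c ≠ 0` gives
`2 (1 - exp (c x)) / c²`, so for `k₂ ≠ 0` the outer integral only sees the frequencies `k₁ = 0`
and `k₁ + k₂ = 0`. Since `g` is symmetric, `ĝ(k, 0) = ĝ(0, k)`, and `ĝ(0, 0) = ∫₀¹ x - x² = 1/6`. -/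

open intervalIntegral MeasureTheory Set

theorem intervalIntegral_integral_swap {E : Type*} [NormedAddCommGroup E] [NormedSpace ℝ E]
    [CompleteSpace E] {f : ℝ → ℝ → E} (hf : Continuous (Function.uncurry f)) {a b c d : ℝ}
    (hab : a ≤ b) (hcd : c ≤ d) :
    ∫ x in a..b, ∫ y in c..d, f x y = ∫ y in c..d, ∫ x in a..b, f x y := by
  simp only [integral_of_le hab, integral_of_le hcd]
  apply integral_integral_swap
  rw [Measure.prod_restrict, ← Measure.volume_eq_prod]
  exact (hf.continuousOn.integrableOn_compact (isCompact_Icc.prod isCompact_Icc)).mono_set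
    (prod_mono Ioc_subset_Icc_self Ioc_subset_Icc_self)

theorem integral_affine_mul_cexp {c : ℂ} (hc : c ≠ 0) (p q : ℂ) (s t : ℝ) :
    ∫ y in s..t, (p + q * y) * cexp (c * y) =
      ((p + q * t) / c - q / c ^ 2) * cexp (c * t) -
        ((p + q * s) / c - q / c ^ 2) * cexp (c * s) := by
  refine integral_eq_sub_of_hasDerivAt
    (f := fun y : ℝ => ((p + q * y) / c - q / c ^ 2) * cexp (c * y)) (fun y _ => ?_)
    ((by fun_prop : Continuous fun y : ℝ => (p + q * y) * cexp (c * y)).intervalIntegrable _ _)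
  have hz : HasDerivAt (fun z : ℂ => z) 1 y := hasDerivAt_id _
  have := ((((hz.const_mul q).const_add p).div_const c).sub_const (q / c ^ 2)).mul
    (hz.const_mul c).cexp
  refine this.comp_ofReal.congr_deriv ?_
  field_simp
  ring

lemma cexp_neg_two_pi_I_mul_int (k : ℤ) : cexp (-2 * π * I * k) = 1 := by
  rw [show -2 * π * I * k = (-k : ℤ) * (2 * π * I) by push_cast; ring]
  exact exp_int_mul_two_pi_mul_I (-k)

lemma neg_two_pi_I_mul_int_ne_zero {k : ℤ} (hk : k ≠ 0) : (-2 * π * I * k : ℂ) ≠ 0 := by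
  simp [hk, pi_ne_zero, I_ne_zero]

lemma neg_two_pi_I_mul_int_sq (k : ℤ) : (-2 * π * I * k : ℂ) ^ 2 = -(4 * π ^ 2 * k ^ 2) := by
  linear_combination (4 * (π : ℂ) ^ 2 * k ^ 2) * I_sq

lemma integral_cexp_neg_two_pi_I_mul_int (k : ℤ) :
    ∫ x in (0:ℝ)..1, cexp (-2 * π * I * k * x) = if k = 0 then 1 else 0 := by
  split_ifs with hk
  · simp [hk]
  · rw [integral_exp_mul_complex (neg_two_pi_I_mul_int_ne_zero hk)]
    simp only [ofReal_one, mul_one, ofReal_zero, mul_zero, Complex.exp_zero,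
      cexp_neg_two_pi_I_mul_int, sub_self, zero_div]

lemma gfun_comm (x y : ℝ) : gfun x y = gfun y x := by
  rw [gfun, gfun, abs_sub_comm]; ring

lemma gfun_of_le {x y : ℝ} (h : y ≤ x) : gfun x y = 2 * y * (1 - x) := by
  rw [gfun, abs_of_nonneg (sub_nonneg.2 h)]; ring

lemma gfun_of_ge {x y : ℝ} (h : x ≤ y) : gfun x y = 2 * x * (1 - y) := by
  rw [gfun_comm, gfun_of_le h]

lemma continuous_gfun : Continuous (Function.uncurry gfun) := by
  unfold gfun Function.uncurry; fun_prop

lemma integral_gfun_mul {x : ℝ} (hx : x ∈ Icc (0:ℝ) 1) {f : ℝ → ℂ} (hf : Continuous f) :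
    ∫ y in (0:ℝ)..1, (gfun x y : ℂ) * f y =
      2 * (1 - x) * (∫ y in (0:ℝ)..x, y * f y) + 2 * x * ∫ y in x..1, (1 - y) * f y := by
  have hint (s t : ℝ) : IntervalIntegrable (fun y => (gfun x y : ℂ) * f y) volume s t :=
    ((continuous_ofReal.comp (continuous_gfun.comp (Continuous.prodMk_right x))).mul
      hf).intervalIntegrable s t
  rw [← integral_add_adjacent_intervals (hint 0 x) (hint x 1),
    ← intervalIntegral.integral_const_mul, ← intervalIntegral.integral_const_mul]
  congr 1 <;> refine integral_congr fun y hy => ?_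
  · rw [uIcc_of_le hx.1] at hy
    simp only [gfun_of_le hy.2]; push_cast; ring
  · rw [uIcc_of_le hx.2] at hy
    simp only [gfun_of_ge hy.1]; push_cast; ring

lemma integral_gfun {x : ℝ} (hx : x ∈ Icc (0:ℝ) 1) :
    ∫ y in (0:ℝ)..1, (gfun x y : ℂ) = ((x - x ^ 2 : ℝ) : ℂ) := by
  have hsplit := integral_gfun_mul hx (f := fun _ => 1) continuous_const
  simp only [mul_one] at hsplit
  have h₁ : ∫ y in (0:ℝ)..x, (y : ℂ) = x ^ 2 / 2 := by
    rw [integral_ofReal, integral_id]; push_cast; ring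
  have h₂ : ∫ y in x..(1:ℝ), (1 - y : ℂ) = 1 - x - (1 - x ^ 2) / 2 := by
    rw [intervalIntegral.integral_sub intervalIntegrable_const
      (continuous_ofReal.intervalIntegrable _ _), intervalIntegral.integral_const, real_smul,
      integral_ofReal, integral_id]
    push_cast; ring
  rw [hsplit, h₁, h₂]
  push_cast
  ring

lemma integral_gfun_mul_cexp {c : ℂ} (hc : c ≠ 0) (hc1 : cexp c = 1) {x : ℝ}
    (hx : x ∈ Icc (0:ℝ) 1) :
    ∫ y in (0:ℝ)..1, (gfun x y : ℂ) * cexp (c * y) = 2 * (1 - cexp (c * x)) / c ^ 2 := by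
  have h₁ := integral_affine_mul_cexp hc 0 1 0 x
  have h₂ := integral_affine_mul_cexp hc 1 (-1) x 1
  simp only [zero_add, one_mul, neg_one_mul, ← sub_eq_add_neg] at h₁ h₂
  rw [integral_gfun_mul hx (by fun_prop), h₁, h₂]
  push_cast
  rw [mul_one, hc1, mul_zero, Complex.exp_zero]
  field_simp
  ring

lemma ghat_eq_integral (k₁ k₂ : ℤ) :
    ghat k₁ k₂ = ∫ x in (0:ℝ)..1, cexp (-2 * π * I * k₁ * x) *
      ∫ y in (0:ℝ)..1, (gfun x y : ℂ) * cexp (-2 * π * I * k₂ * y) := by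
  refine integral_congr fun x _ => ?_
  simp only [← intervalIntegral.integral_const_mul]
  refine integral_congr fun y _ => ?_
  rw [show -2 * π * I * (k₁ * x + k₂ * y) = -2 * π * I * k₁ * x + -2 * π * I * k₂ * y by ring,
    Complex.exp_add]
  ring

lemma ghat_comm (k₁ k₂ : ℤ) : ghat k₁ k₂ = ghat k₂ k₁ := by
  unfold ghat
  rw [intervalIntegral_integral_swap ((continuous_ofReal.comp continuous_gfun).mul (by fun_prop))
    zero_le_one zero_le_one]
  refine integral_congr fun x _ => integral_congr fun y _ => ?_
  simp only [gfun_comm, add_comm]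

lemma ghat_zero_zero : ghat 0 0 = 1 / 6 := by
  have h : ∀ x ∈ uIcc (0:ℝ) 1, cexp (-2 * π * I * (0:ℤ) * x) *
      ∫ y in (0:ℝ)..1, (gfun x y : ℂ) * cexp (-2 * π * I * (0:ℤ) * y) = ((x - x ^ 2 : ℝ) : ℂ) := by
    intro x hx
    rw [uIcc_of_le zero_le_one] at hx
    simp only [Int.cast_zero, mul_zero, zero_mul, Complex.exp_zero, mul_one, one_mul]
    exact integral_gfun hx
  rw [ghat_eq_integral, integral_congr h, intervalIntegral.integral_ofReal]
  norm_num [intervalIntegral.integral_sub, integral_pow]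

lemma ghat_of_ne_zero (k₁ : ℤ) {k₂ : ℤ} (hk₂ : k₂ ≠ 0) :
    ghat k₁ k₂ = ((if k₁ + k₂ = 0 then 1 else 0) - (if k₁ = 0 then 1 else 0)) /
      (2 * π ^ 2 * k₂ ^ 2) := by
  set c : ℂ := -2 * π * I * k₂ with hc
  have hc₀ : c ≠ 0 := neg_two_pi_I_mul_int_ne_zero hk₂
  have h : ∀ x ∈ uIcc (0:ℝ) 1, cexp (-2 * π * I * k₁ * x) *
      ∫ y in (0:ℝ)..1, (gfun x y : ℂ) * cexp (c * y) =
        2 / c ^ 2 * (cexp (-2 * π * I * k₁ * x) - cexp (-2 * π * I * (k₁ + k₂ : ℤ) * x)) := by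
    intro x hx
    rw [uIcc_of_le zero_le_one] at hx
    rw [integral_gfun_mul_cexp hc₀ (cexp_neg_two_pi_I_mul_int k₂) hx,
      show -2 * π * I * (k₁ + k₂ : ℤ) * x = -2 * π * I * k₁ * x + c * x by push_cast; ring,
      Complex.exp_add]
    ring
  rw [ghat_eq_integral, integral_congr h, intervalIntegral.integral_const_mul,
    intervalIntegral.integral_sub (Continuous.intervalIntegrable (by fun_prop) _ _)
      (Continuous.intervalIntegrable (by fun_prop) _ _),
    integral_cexp_neg_two_pi_I_mul_int, integral_cexp_neg_two_pi_I_mul_int,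
    hc, neg_two_pi_I_mul_int_sq]
  have : (k₂ : ℂ) ≠ 0 := by exact_mod_cast hk₂
  field_simp
  ring

theorem fourier_coeffs_g :
    ghat 0 0 = 1 / 6 ∧
    (∀ k : ℤ, k ≠ 0 → ghat k 0 = -(1 / (2 * (π : ℂ) ^ 2 * (k : ℂ) ^ 2))) ∧
    (∀ k : ℤ, k ≠ 0 → ghat 0 k = -(1 / (2 * (π : ℂ) ^ 2 * (k : ℂ) ^ 2))) ∧
    (∀ k : ℤ, k ≠ 0 → ghat k (-k) = 1 / (2 * (π : ℂ) ^ 2 * (k : ℂ) ^ 2)) ∧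
    (∀ k₁ k₂ : ℤ, k₁ ≠ 0 → k₂ ≠ 0 → k₂ ≠ -k₁ → ghat k₁ k₂ = 0) := by
  refine ⟨ghat_zero_zero, fun k hk => ?_, fun k hk => ?_, fun k hk => ?_,
    fun k₁ k₂ hk₁ hk₂ hne => ?_⟩
  · rw [ghat_comm, ghat_of_ne_zero 0 hk]
    simp [hk, neg_div]
  · rw [ghat_of_ne_zero 0 hk]
    simp [hk, neg_div]
  · rw [ghat_of_ne_zero k (neg_ne_zero.2 hk)]
    simp [hk]
  · rw [ghat_of_ne_zero k₁ hk₂, if_neg (by omega), if_neg hk₁]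
    simp
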